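/- If x = [\overline{a_0,...,a_n}] is the value of a purely periodic continued fraction with all a_i ≥ 1, then x > 1 and x satisfies a quadratic equation q x^2 + (s - p) x - r = 0 with integer coefficients, where p/q = [a_0,...,a_n] and r/s = [a_0,...,a_{n-1}] in lowest terms; in particular x is irrational provided (p-s)^2 + 4rq is not a perfect square. -/

import Mathlib

/-!
Since every partial quotient is at least `1`, the finite fractions satisfy `p/q > 1` and
`r/s ≥ 1`, i.e. `q < p` and `s ≤ r`. Clearing the denominator in `x = (px + r)/(qx + s)` gives
`q x² + (s - p) x - r = 0`, and for `0 < x ≤ 1` the left side would be at most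
`(q - p) x + (s - r) < 0`. A rational root `t` would make the discriminant
`(s - p)² + 4qr = (2qt + s - p)²` a rational, hence integral, square.
-/

def cf : List ℚ → ℚ
  | [] => 0
  | [a] => a
  | a :: b :: l => a + 1 / cf (b :: l)

theorem one_lt_cf_cons_cons {a b : ℚ} {l : List ℚ} (ha : 1 ≤ a) (hb : 1 ≤ cf (b :: l)) :
    1 < cf (a :: b :: l) := by
  have : 0 < 1 / cf (b :: l) := one_div_pos.2 (zero_lt_one.trans_le hb)
  simp only [cf]
  linarith

theorem one_le_cf : ∀ {l : List ℚ}, l ≠ [] → (∀ a ∈ l, 1 ≤ a) → 1 ≤ cf l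
  | [a], _, h => by simpa [cf] using h
  | a :: b :: l, _, h => (one_lt_cf_cons_cons (h a List.mem_cons_self)
      (one_le_cf (List.cons_ne_nil b l) fun c hc => h c (List.mem_cons_of_mem a hc))).le

theorem one_lt_cf {l : List ℚ} (hl : 2 ≤ l.length) (h : ∀ a ∈ l, 1 ≤ a) : 1 < cf l :=
  match l, hl with
  | a :: b :: l, _ => one_lt_cf_cons_cons (h a List.mem_cons_self)
      (one_le_cf (List.cons_ne_nil b l) fun c hc => h c (List.mem_cons_of_mem a hc))

-- `l.map (fun a => (a : ℚ))` elaborates as `List.map id (l >>= fun a => pure ↑a)`, via the list coercion.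
theorem List.map_coe_natCast (l : List ℕ) :
    l.map (fun a => (a : ℚ)) = l.map (Nat.cast : ℕ → ℚ) := by
  simp [List.map_eq_flatMap]

theorem one_lt_of_quadratic_eq_zero {K : Type*} [Field K] [LinearOrder K] [IsStrictOrderedRing K]
    {p q r s x : K} (hq : 0 ≤ q) (hs : 0 ≤ s) (hqp : q < p) (hsr : s ≤ r) (hx : 0 < x)
    (h : q * x ^ 2 + (s - p) * x - r = 0) : 1 < x := by
  by_contra! hx1
  nlinarith [mul_le_mul_of_nonneg_left hx1 (mul_nonneg hq hx.le), mul_le_mul_of_nonneg_left hx1 hs,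
    mul_lt_mul_of_pos_right hqp hx]

theorem irrational_of_quadratic_eq_zero {a b c : ℤ} {x : ℝ}
    (hx : a * (x * x) + b * x + c = 0) (hd : ¬ IsSquare (discrim a b c)) : Irrational x := by
  rintro ⟨t, rfl⟩
  have ht : (a : ℚ) * (t * t) + b * t + c = 0 := by exact_mod_cast hx
  apply hd
  rw [← Rat.isSquare_intCast_iff, show ((discrim a b c : ℤ) : ℚ) = discrim (a : ℚ) b c by
    simp [discrim]]
  exact ⟨_, (discrim_eq_sq_of_quadratic_eq_zero ht).trans (sq _)⟩

theorem stmt_17_general (l : List ℕ) (hlen : 2 ≤ l.length) (hpos : ∀ a ∈ l, 1 ≤ a)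
    (p q r s : ℤ) (hq : 0 < q) (hs : 0 < s)
    (h1 : (p : ℚ) / q = cf (l.map (fun a => (a : ℚ))))
    (h2 : (r : ℚ) / s = cf (l.dropLast.map (fun a => (a : ℚ))))
    (x : ℝ) (hx : 0 < x) (hfix : x = ((p : ℝ) * x + r) / ((q : ℝ) * x + s)) :
    1 < x ∧ (q : ℝ) * x ^ 2 + ((s : ℝ) - p) * x - r = 0 ∧
      (¬ IsSquare ((p - s) ^ 2 + 4 * r * q) → Irrational x) := by
  rw [List.map_coe_natCast] at h1 h2
  have hqp : q < p := by
    have : (1 : ℚ) < p / q := h1 ▸ one_lt_cf (by simpa using hlen)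
      (List.forall_mem_map.2 fun a ha => by exact_mod_cast hpos a ha)
    exact_mod_cast (one_lt_div (by exact_mod_cast hq)).1 this
  have hsr : s ≤ r := by
    have : (1 : ℚ) ≤ r / s := h2 ▸ one_le_cf (List.ne_nil_of_length_pos (by simp; omega))
      (List.forall_mem_map.2 fun a ha => by exact_mod_cast hpos a (List.mem_of_mem_dropLast ha))
    exact_mod_cast (one_le_div (by exact_mod_cast hs)).1 this
  have hden : (q : ℝ) * x + s ≠ 0 := by positivity
  have hquad : (q : ℝ) * x ^ 2 + ((s : ℝ) - p) * x - r = 0 := by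
    rw [eq_div_iff hden] at hfix
    linear_combination hfix
  refine ⟨one_lt_of_quadratic_eq_zero (by positivity) (by positivity) (by exact_mod_cast hqp)
    (by exact_mod_cast hsr) hx hquad, hquad, fun hD => ?_⟩
  refine irrational_of_quadratic_eq_zero (a := q) (b := s - p) (c := -r) ?_ ?_
  · push_cast
    linear_combination hquad
  · rwa [discrim, show (s - p) ^ 2 - 4 * q * -r = (p - s) ^ 2 + 4 * r * q by ring]

/-- If x = [\overline{a₀,…,aₙ}] (all aᵢ ≥ 1), i.e. x > 0 and x = (px+r)/(qx+s)
where p/q = [a₀,…,aₙ] and r/s = [a₀,…,a_{n-1}] in lowest terms, then x > 1 and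
qx² + (s-p)x - r = 0; if (p-s)² + 4rq is not a perfect square then x is irrational. -/
theorem stmt_17 (l : List ℕ) (hlen : 2 ≤ l.length) (hpos : ∀ a ∈ l, 1 ≤ a)
    (p q r s : ℤ) (hp : 0 < p) (hq : 0 < q) (hr : 0 < r) (hs : 0 < s)
    (hpq : IsCoprime p q) (hrs : IsCoprime r s)
    (h1 : (p : ℚ) / q = cf (l.map (fun a => (a : ℚ))))
    (h2 : (r : ℚ) / s = cf (l.dropLast.map (fun a => (a : ℚ))))
    (x : ℝ) (hx : 0 < x) (hfix : x = ((p : ℝ) * x + r) / ((q : ℝ) * x + s)) :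
    1 < x ∧ (q : ℝ) * x ^ 2 + ((s : ℝ) - p) * x - r = 0 ∧
      (¬ IsSquare ((p - s) ^ 2 + 4 * r * q) → Irrational x) :=
  stmt_17_general l hlen hpos p q r s hq hs h1 h2 x hx hfix
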